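/- Let n ≥ 1 and δ > 0, and let C_δ be the set of n×n complex Hermitian matrices T such that T − δ·I is positive semidefinite and trace(T) ≤ 1. Then γ₊ is Lipschitz continuous on C_δ with respect to the Frobenius norm, with Lipschitz constant n/δ + n^{3/2}: for all T₁, T₂ ∈ C_δ, |γ₊(T₁) − γ₊(T₂)| ≤ (n/δ + n^{3/2})·‖T₁ − T₂‖_Fr. -/

import Mathlib

open Matrix ComplexOrder

/-- The ℓ¹ norm of a vector in ℂⁿ. -/
noncomputable def l1n {n : ℕ} (x : Fin n → ℂ) : ℝ := ∑ i, ‖x i‖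

/-- The entrywise ℓ¹ norm ‖A‖₁,₁ of a matrix. -/
noncomputable def norm11 {n : ℕ} (A : Matrix (Fin n) (Fin n) ℂ) : ℝ :=
  ∑ i, ∑ j, ‖A i j‖

/-- The Frobenius norm of a matrix. -/
noncomputable def frobNorm {n : ℕ} (A : Matrix (Fin n) (Fin n) ℂ) : ℝ :=
  Real.sqrt (∑ i, ∑ j, ‖A i j‖ ^ 2)

/-- γ₊(A): infimum of Σ ‖g_k‖₁² over finite decompositions A = Σ g_k g_k*. -/
noncomputable def gammaPlus {n : ℕ} (A : Matrix (Fin n) (Fin n) ℂ) : ℝ :=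
  sInf {r : ℝ | ∃ (m : ℕ) (g : Fin m → Fin n → ℂ),
    A = ∑ k, vecMulVec (g k) (star (g k)) ∧ r = ∑ k, (l1n (g k)) ^ 2}

/-- γ(A): infimum of Σ ‖g_k‖₁‖h_k‖₁ over finite decompositions A = Σ g_k h_k*. -/
noncomputable def gammaCross {n : ℕ} (A : Matrix (Fin n) (Fin n) ℂ) : ℝ :=
  sInf {r : ℝ | ∃ (m : ℕ) (g h : Fin m → Fin n → ℂ),
    A = ∑ k, vecMulVec (g k) (star (h k)) ∧ r = ∑ k, l1n (g k) * l1n (h k)}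

/-- γ₀(A): infimum of γ₊(B) + γ₊(C) over decompositions A = B - C with B, C PSD. -/
noncomputable def gammaZero {n : ℕ} (A : Matrix (Fin n) (Fin n) ℂ) : ℝ :=
  sInf {r : ℝ | ∃ B C : Matrix (Fin n) (Fin n) ℂ, B.PosSemidef ∧ C.PosSemidef ∧
    A = B - C ∧ r = gammaPlus B + gammaPlus C}

/-!
Both matrices lie in the PSD cone, and there `γ₊` is subadditive, positively homogeneous and
bounded by `n · trace` (Cauchy–Schwarz, `‖g‖₁² ≤ n ‖g‖₂²`, applied to any decomposition
`A = ∑ g_k g_k*`). Let `E = T₁ - T₂` and `F = ‖E‖_Fr`. If `F ≥ δ`, then already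
`γ₊(T₁) ≤ n ≤ (n/δ) F`. Otherwise, with `s = F/δ ≤ 1`, split
`T₁ = (1 - s) T₂ + (s T₂ + E)`; the second summand equals `s (T₂ - δ I) + (F I + E)`, which is PSD
because `|x* E x| ≤ F ‖x‖₂²`. Hence
`γ₊(T₁) ≤ (1 - s) γ₊(T₂) + n (s trace T₂ + trace E) ≤ γ₊(T₂) + (n/δ) F + n √n F`,
using `trace E ≤ √n F`. Exchanging `T₁` and `T₂` gives the absolute value.
-/

open scoped Pointwise

variable {n : ℕ}

def gammaPlusCosts (A : Matrix (Fin n) (Fin n) ℂ) : Set ℝ :=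
  {r : ℝ | ∃ (m : ℕ) (g : Fin m → Fin n → ℂ),
    A = ∑ k, vecMulVec (g k) (star (g k)) ∧ r = ∑ k, l1n (g k) ^ 2}

lemma gammaPlus_eq_sInf_gammaPlusCosts (A : Matrix (Fin n) (Fin n) ℂ) :
    gammaPlus A = sInf (gammaPlusCosts A) :=
  rfl

lemma nonneg_of_mem_gammaPlusCosts {A : Matrix (Fin n) (Fin n) ℂ} {r : ℝ}
    (hr : r ∈ gammaPlusCosts A) : 0 ≤ r := by
  obtain ⟨m, g, -, rfl⟩ := hr
  positivity

lemma bddBelow_gammaPlusCosts (A : Matrix (Fin n) (Fin n) ℂ) : BddBelow (gammaPlusCosts A) :=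
  ⟨0, fun _ => nonneg_of_mem_gammaPlusCosts⟩

lemma gammaPlus_le_of_mem {A : Matrix (Fin n) (Fin n) ℂ} {r : ℝ} (hr : r ∈ gammaPlusCosts A) :
    gammaPlus A ≤ r :=
  csInf_le (bddBelow_gammaPlusCosts A) hr

lemma gammaPlus_nonneg (A : Matrix (Fin n) (Fin n) ℂ) : 0 ≤ gammaPlus A :=
  Real.sInf_nonneg fun _ => nonneg_of_mem_gammaPlusCosts

lemma Matrix.PosSemidef.gammaPlusCosts_nonempty {A : Matrix (Fin n) (Fin n) ℂ}
    (hA : A.PosSemidef) : (gammaPlusCosts A).Nonempty := by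
  obtain ⟨m, g, hg⟩ := posSemidef_iff_eq_sum_vecMulVec.mp hA
  exact ⟨_, m, g, hg, rfl⟩

lemma add_gammaPlusCosts_subset (A B : Matrix (Fin n) (Fin n) ℂ) :
    gammaPlusCosts A + gammaPlusCosts B ⊆ gammaPlusCosts (A + B) := by
  rintro _ ⟨_, ⟨m₁, g, rfl, rfl⟩, _, ⟨m₂, h, rfl, rfl⟩, rfl⟩
  exact ⟨m₁ + m₂, Fin.append g h, by simp [Fin.sum_univ_add], by simp [Fin.sum_univ_add]⟩

lemma l1n_smul (c : ℂ) (v : Fin n → ℂ) : l1n (c • v) = ‖c‖ * l1n v := by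
  simp [l1n, Finset.mul_sum]

lemma smul_gammaPlusCosts_subset {c : ℝ} (hc : 0 ≤ c) (A : Matrix (Fin n) (Fin n) ℂ) :
    c • gammaPlusCosts A ⊆ gammaPlusCosts (c • A) := by
  rintro _ ⟨_, ⟨m, g, rfl, rfl⟩, rfl⟩
  refine ⟨m, fun k => (√c : ℂ) • g k, ?_, ?_⟩
  · rw [Finset.smul_sum]
    refine Finset.sum_congr rfl fun k _ => ?_
    rw [star_smul, smul_vecMulVec, vecMulVec_smul, smul_smul, Complex.star_def,
      Complex.conj_ofReal, ← Complex.ofReal_mul, Real.mul_self_sqrt hc, Complex.coe_smul]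
  · simp only [smul_eq_mul, Finset.mul_sum]
    refine Finset.sum_congr rfl fun k _ => ?_
    rw [l1n_smul, Complex.norm_real, Real.norm_of_nonneg (Real.sqrt_nonneg c), mul_pow,
      Real.sq_sqrt hc]

lemma gammaPlus_add_le {A B : Matrix (Fin n) (Fin n) ℂ} (hA : A.PosSemidef) (hB : B.PosSemidef) :
    gammaPlus (A + B) ≤ gammaPlus A + gammaPlus B := by
  simp only [gammaPlus_eq_sInf_gammaPlusCosts]
  rw [← csInf_add hA.gammaPlusCosts_nonempty (bddBelow_gammaPlusCosts A)
    hB.gammaPlusCosts_nonempty (bddBelow_gammaPlusCosts B)]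
  exact csInf_le_csInf (bddBelow_gammaPlusCosts _)
    (hA.gammaPlusCosts_nonempty.add hB.gammaPlusCosts_nonempty) (add_gammaPlusCosts_subset A B)

lemma gammaPlus_smul_le {c : ℝ} (hc : 0 ≤ c) {A : Matrix (Fin n) (Fin n) ℂ}
    (hA : A.PosSemidef) : gammaPlus (c • A) ≤ c * gammaPlus A := by
  simp only [gammaPlus_eq_sInf_gammaPlusCosts]
  rw [← smul_eq_mul, ← Real.sInf_smul_of_nonneg hc]
  exact csInf_le_csInf (bddBelow_gammaPlusCosts _) hA.gammaPlusCosts_nonempty.smul_set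
    (smul_gammaPlusCosts_subset hc A)

lemma l1n_sq_le_card_mul (v : Fin n → ℂ) : l1n v ^ 2 ≤ n * ∑ i, ‖v i‖ ^ 2 := by
  simpa [l1n] using sq_sum_le_card_mul_sum_sq (s := Finset.univ) (f := fun i => ‖v i‖)

lemma star_dotProduct_self (x : Fin n → ℂ) : star x ⬝ᵥ x = ((∑ i, ‖x i‖ ^ 2 : ℝ) : ℂ) := by
  simp [dotProduct, Complex.conj_mul']

lemma re_trace_vecMulVec_star (v : Fin n → ℂ) :
    (vecMulVec v (star v)).trace.re = ∑ i, ‖v i‖ ^ 2 := by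
  rw [trace_vecMulVec, dotProduct_comm, star_dotProduct_self, Complex.ofReal_re]

lemma gammaPlus_le_card_mul_trace {A : Matrix (Fin n) (Fin n) ℂ} (hA : A.PosSemidef) :
    gammaPlus A ≤ n * A.trace.re := by
  obtain ⟨m, g, rfl⟩ := posSemidef_iff_eq_sum_vecMulVec.mp hA
  refine (gammaPlus_le_of_mem ⟨m, g, rfl, rfl⟩).trans ?_
  simp only [trace_sum, Complex.re_sum, re_trace_vecMulVec_star]
  rw [Finset.mul_sum]
  exact Finset.sum_le_sum fun k _ => l1n_sq_le_card_mul (g k)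

lemma frobNorm_nonneg (E : Matrix (Fin n) (Fin n) ℂ) : 0 ≤ frobNorm E :=
  Real.sqrt_nonneg _

lemma frobNorm_sub_comm (A B : Matrix (Fin n) (Fin n) ℂ) :
    frobNorm (A - B) = frobNorm (B - A) := by
  simp only [frobNorm, Matrix.sub_apply, norm_sub_rev]

lemma norm_sum_mul_le_frobNorm_mul (M E : Matrix (Fin n) (Fin n) ℂ) :
    ‖∑ i, ∑ j, M i j * E i j‖ ≤ frobNorm M * frobNorm E := by
  calc ‖∑ i, ∑ j, M i j * E i j‖
      ≤ ∑ i, ∑ j, ‖M i j‖ * ‖E i j‖ := by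
        refine (norm_sum_le _ _).trans (Finset.sum_le_sum fun i _ => ?_)
        exact (norm_sum_le _ _).trans_eq (by simp only [norm_mul])
    _ = ∑ p : Fin n × Fin n, ‖M p.1 p.2‖ * ‖E p.1 p.2‖ := (Fintype.sum_prod_type' _).symm
    _ ≤ _ := Real.sum_mul_le_sqrt_mul_sqrt _ _ _
    _ = frobNorm M * frobNorm E := by
        simp only [frobNorm, Fintype.sum_prod_type' (fun i j => ‖M i j‖ ^ 2),
          Fintype.sum_prod_type' (fun i j => ‖E i j‖ ^ 2)]

lemma frobNorm_one : frobNorm (1 : Matrix (Fin n) (Fin n) ℂ) = √n := by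
  simp [frobNorm, one_apply, apply_ite (fun z : ℂ => ‖z‖ ^ 2)]

lemma frobNorm_vecMulVec_star (x : Fin n → ℂ) :
    frobNorm (vecMulVec (star x) x) = ∑ i, ‖x i‖ ^ 2 := by
  have h : ∑ i, ∑ j, ‖vecMulVec (star x) x i j‖ ^ 2 = (∑ i, ‖x i‖ ^ 2) ^ 2 := by
    simp [sq (Finset.sum _ _), Finset.sum_mul_sum, vecMulVec_apply, mul_pow]
  rw [frobNorm, h, Real.sqrt_sq (Finset.sum_nonneg fun i _ => by positivity)]

lemma re_trace_le_sqrt_card_mul_frobNorm (E : Matrix (Fin n) (Fin n) ℂ) :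
    E.trace.re ≤ √n * frobNorm E := by
  have h : E.trace = ∑ i, ∑ j, (1 : Matrix (Fin n) (Fin n) ℂ) i j * E i j := by
    simp [trace, one_apply]
  calc E.trace.re ≤ ‖E.trace‖ := Complex.re_le_norm _
    _ ≤ √n * frobNorm E := h ▸ frobNorm_one (n := n) ▸ norm_sum_mul_le_frobNorm_mul _ _

lemma norm_star_dotProduct_mulVec_le (E : Matrix (Fin n) (Fin n) ℂ) (x : Fin n → ℂ) :
    ‖star x ⬝ᵥ E *ᵥ x‖ ≤ frobNorm E * ∑ i, ‖x i‖ ^ 2 := by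
  have h : star x ⬝ᵥ E *ᵥ x = ∑ i, ∑ j, vecMulVec (star x) x i j * E i j := by
    simp only [dotProduct, mulVec, vecMulVec_apply, Finset.mul_sum]
    exact Finset.sum_congr rfl fun i _ => Finset.sum_congr rfl fun j _ => by ring
  rw [h, mul_comm, ← frobNorm_vecMulVec_star]
  exact norm_sum_mul_le_frobNorm_mul _ _

lemma posSemidef_frobNorm_smul_one_add {E : Matrix (Fin n) (Fin n) ℂ} (hE : E.IsHermitian) :
    (frobNorm E • (1 : Matrix (Fin n) (Fin n) ℂ) + E).PosSemidef := by
  refine .of_dotProduct_mulVec_nonneg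
    ((PosSemidef.one.smul (frobNorm_nonneg E)).isHermitian.add hE) fun x => ?_
  rw [add_mulVec, dotProduct_add, smul_mulVec, one_mulVec, dotProduct_smul, star_dotProduct_self,
    Complex.nonneg_iff]
  constructor
  · have := (Complex.abs_re_le_norm _).trans (norm_star_dotProduct_mulVec_le E x)
    simp only [Complex.add_re, Complex.real_smul, Complex.re_ofReal_mul, Complex.ofReal_re]
    linarith [neg_abs_le (star x ⬝ᵥ E *ᵥ x).re]
  · simp only [Complex.add_im, Complex.real_smul, Complex.im_ofReal_mul, Complex.ofReal_im,
      mul_zero, zero_add]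
    exact (hE.im_star_dotProduct_mulVec_self x).symm

lemma Matrix.PosSemidef.of_sub_smul_one {T : Matrix (Fin n) (Fin n) ℂ} {δ : ℝ} (hδ : 0 ≤ δ)
    (h : (T - δ • (1 : Matrix (Fin n) (Fin n) ℂ)).PosSemidef) : T.PosSemidef := by
  simpa using h.add (PosSemidef.one.smul hδ)

lemma gammaPlus_le_add_of_frobNorm_sub_le {δ : ℝ} (hδ : 0 < δ)
    {T₁ T₂ : Matrix (Fin n) (Fin n) ℂ} (hT₁ : T₁.IsHermitian)
    (hT₂δ : (T₂ - δ • (1 : Matrix (Fin n) (Fin n) ℂ)).PosSemidef) (htr₂ : T₂.trace.re ≤ 1)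
    (hF : frobNorm (T₁ - T₂) ≤ δ) :
    gammaPlus T₁ ≤ gammaPlus T₂ + (n / δ + n * √n) * frobNorm (T₁ - T₂) := by
  set F := frobNorm (T₁ - T₂)
  set s := F / δ
  have hT₂ : T₂.PosSemidef := hT₂δ.of_sub_smul_one hδ.le
  have hs0 : 0 ≤ s := div_nonneg (frobNorm_nonneg _) hδ.le
  have hs1 : s ≤ 1 := (div_le_one hδ).mpr hF
  have hB : (s • T₂ + (T₁ - T₂)).PosSemidef := by
    have h : s • T₂ + (T₁ - T₂) = s • (T₂ - δ • 1) + (F • 1 + (T₁ - T₂)) := by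
      rw [smul_sub, smul_smul, div_mul_cancel₀ _ hδ.ne']
      abel
    rw [h]
    exact (hT₂δ.smul hs0).add (posSemidef_frobNorm_smul_one_add (hT₁.sub hT₂.isHermitian))
  have htrB : (s • T₂ + (T₁ - T₂)).trace.re ≤ s + √n * F := by
    rw [trace_add, trace_smul, Complex.add_re, Complex.smul_re, smul_eq_mul]
    gcongr
    · exact mul_le_of_le_one_right hs0 htr₂
    · exact re_trace_le_sqrt_card_mul_frobNorm _
  have hγ₂ := mul_nonneg hs0 (gammaPlus_nonneg T₂)
  calc gammaPlus T₁ = gammaPlus ((1 - s) • T₂ + (s • T₂ + (T₁ - T₂))) := by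
        rw [sub_smul, one_smul]
        abel_nf
    _ ≤ gammaPlus ((1 - s) • T₂) + gammaPlus (s • T₂ + (T₁ - T₂)) :=
        gammaPlus_add_le (hT₂.smul (sub_nonneg.mpr hs1)) hB
    _ ≤ (1 - s) * gammaPlus T₂ + n * (s + √n * F) :=
        add_le_add (gammaPlus_smul_le (sub_nonneg.mpr hs1) hT₂)
          ((gammaPlus_le_card_mul_trace hB).trans (by gcongr))
    _ ≤ gammaPlus T₂ + (n / δ + n * √n) * F := by
        have hns : (n : ℝ) * s = n / δ * F := by ring
        nlinarith

lemma gammaPlus_le_add_of_posSemidef_sub_smul_one {δ : ℝ} (hδ : 0 < δ)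
    {T₁ T₂ : Matrix (Fin n) (Fin n) ℂ}
    (hT₁δ : (T₁ - δ • (1 : Matrix (Fin n) (Fin n) ℂ)).PosSemidef)
    (hT₂δ : (T₂ - δ • (1 : Matrix (Fin n) (Fin n) ℂ)).PosSemidef)
    (htr₁ : T₁.trace.re ≤ 1) (htr₂ : T₂.trace.re ≤ 1) :
    gammaPlus T₁ ≤ gammaPlus T₂ + (n / δ + n * √n) * frobNorm (T₁ - T₂) := by
  have hT₁ : T₁.PosSemidef := hT₁δ.of_sub_smul_one hδ.le
  rcases le_or_gt (frobNorm (T₁ - T₂)) δ with hF | hF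
  · exact gammaPlus_le_add_of_frobNorm_sub_le hδ hT₁.isHermitian hT₂δ htr₂ hF
  · have hn : (n : ℝ) ≤ n / δ * frobNorm (T₁ - T₂) := by
      rw [div_mul_eq_mul_div, le_div_iff₀ hδ]
      gcongr
    calc gammaPlus T₁ ≤ n * T₁.trace.re := gammaPlus_le_card_mul_trace hT₁
      _ ≤ n := mul_le_of_le_one_right n.cast_nonneg htr₁
      _ ≤ gammaPlus T₂ + (n / δ + n * √n) * frobNorm (T₁ - T₂) := by
        have := gammaPlus_nonneg T₂
        have := frobNorm_nonneg (T₁ - T₂)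
        have : 0 ≤ (n : ℝ) * √n := by positivity
        nlinarith

lemma natCast_rpow_three_halves (n : ℕ) : (n : ℝ) ^ ((3 : ℝ) / 2) = n * √n := by
  rw [show (3 : ℝ) / 2 = 1 / 2 * 3 by norm_num, Real.rpow_mul n.cast_nonneg, ← Real.sqrt_eq_rpow]
  norm_num [pow_succ, Real.mul_self_sqrt n.cast_nonneg]

theorem stmt14_general (n : ℕ) (δ : ℝ) (hδ : 0 < δ)
    (T₁ T₂ : Matrix (Fin n) (Fin n) ℂ)
    (hT₁δ : (T₁ - δ • (1 : Matrix (Fin n) (Fin n) ℂ)).PosSemidef)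
    (hT₂δ : (T₂ - δ • (1 : Matrix (Fin n) (Fin n) ℂ)).PosSemidef)
    (htr₁ : T₁.trace.re ≤ 1) (htr₂ : T₂.trace.re ≤ 1) :
    |gammaPlus T₁ - gammaPlus T₂| ≤
      ((n : ℝ) / δ + (n : ℝ) ^ ((3 : ℝ) / 2)) * frobNorm (T₁ - T₂) := by
  rw [natCast_rpow_three_halves, abs_sub_le_iff]
  constructor
  · linarith [gammaPlus_le_add_of_posSemidef_sub_smul_one hδ hT₁δ hT₂δ htr₁ htr₂]
  · have h := gammaPlus_le_add_of_posSemidef_sub_smul_one hδ hT₂δ hT₁δ htr₂ htr₁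
    rw [frobNorm_sub_comm] at h
    linarith

theorem stmt14 (n : ℕ) (hn : 1 ≤ n) (δ : ℝ) (hδ : 0 < δ)
    (T₁ T₂ : Matrix (Fin n) (Fin n) ℂ)
    (hT₁ : T₁.IsHermitian) (hT₂ : T₂.IsHermitian)
    (hT₁δ : (T₁ - δ • (1 : Matrix (Fin n) (Fin n) ℂ)).PosSemidef)
    (hT₂δ : (T₂ - δ • (1 : Matrix (Fin n) (Fin n) ℂ)).PosSemidef)
    (htr₁ : T₁.trace.re ≤ 1) (htr₂ : T₂.trace.re ≤ 1) :
    |gammaPlus T₁ - gammaPlus T₂| ≤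
      ((n : ℝ) / δ + (n : ℝ) ^ ((3 : ℝ) / 2)) * frobNorm (T₁ - T₂) :=
  stmt14_general n δ hδ T₁ T₂ hT₁δ hT₂δ htr₁ htr₂
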